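/- arXiv:1106.4955 — 2 statements merged into one kernel-verified Lean document; each statement's English description precedes it below -/
import Mathlib

section
/- Let E be a real inner product space (e.g. EuclideanSpace ℝ (Fin 3)), m > 0 a real number, and x : ℝ → E a C² curve. Then the following are equivalent: (i) for every smooth variation v : ℝ → E (C^∞) with v(0) = 0 and v(1) = 0 one has ∫₀¹ ⟨m • deriv x t, deriv v t⟩ dt = 0; (ii) for every t in the open interval (0,1), deriv (deriv x) t = 0. That is, x is a critical point of the free-particle action S(x) = ∫₀¹ (m/2)|x′|² among histories with fixed endpoints if and only if x satisfies the Euler–Lagrange equation m x″ = 0 on (0,1). -/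
open scoped RealInnerProductSpace
open MeasureTheory Set Polynomial

section Aux

variable {E : Type*} [NormedAddCommGroup E] [InnerProductSpace ℝ E]

/-- Integration by parts for the first variation. -/
private lemma free_ibp (x v : ℝ → E)
    (hx1 : Differentiable ℝ (deriv x)) (hxc : Continuous (deriv x))
    (hx2 : Continuous (deriv (deriv x)))
    (hv1 : Differentiable ℝ v) (hv2 : Continuous (deriv v)) :
    (∫ t in (0:ℝ)..1, ⟪deriv x t, deriv v t⟫) =
      (⟪deriv x 1, v 1⟫ - ⟪deriv x 0, v 0⟫) -
        ∫ t in (0:ℝ)..1, ⟪deriv (deriv x) t, v t⟫ := by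
  have key : ∀ t : ℝ, HasDerivAt (fun s => ⟪deriv x s, v s⟫)
      (⟪deriv x t, deriv v t⟫ + ⟪deriv (deriv x) t, v t⟫) t := fun t =>
    (hx1 t).hasDerivAt.inner ℝ (hv1 t).hasDerivAt
  have hA : IntervalIntegrable (fun t => ⟪deriv x t, deriv v t⟫) volume 0 1 :=
    (hxc.inner hv2).intervalIntegrable _ _
  have hB : IntervalIntegrable (fun t => ⟪deriv (deriv x) t, v t⟫) volume 0 1 :=
    (hx2.inner hv1.continuous).intervalIntegrable _ _
  have hsub := intervalIntegral.integral_eq_sub_of_hasDerivAt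
      (f := fun s => ⟪deriv x s, v s⟫) (fun t _ => key t) (hA.add hB)
  rw [intervalIntegral.integral_add hA hB] at hsub
  linarith

/-- The fundamental lemma of the calculus of variations, polynomial version:
if `∫₀¹ t(1-t)p(t) g(t) = 0` for every polynomial `p`, then `g` vanishes on `(0,1)`. -/
private lemma fund_lemma (g : ℝ → ℝ) (hg : Continuous g)
    (h0 : ∀ p : ℝ[X], (∫ t in (0:ℝ)..1, (t * (1 - t) * p.eval t) * g t) = 0) :
    ∀ t0 ∈ Set.Ioo (0:ℝ) 1, g t0 = 0 := by
  set h : ℝ → ℝ := fun t => t * (1 - t) * g t with hh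
  have hhc : Continuous h := by fun_prop
  -- first: ∫ h² = 0
  have hI : (∫ t in (0:ℝ)..1, h t * h t) = 0 := by
    set I := ∫ t in (0:ℝ)..1, h t * h t with hIdef
    set C := ∫ t in (0:ℝ)..1, |h t| with hCdef
    have hC0 : 0 ≤ C := intervalIntegral.integral_nonneg zero_le_one (fun t _ => abs_nonneg _)
    have key : ∀ ε : ℝ, 0 < ε → |I| ≤ C * ε := by
      intro ε hε
      obtain ⟨p, hp⟩ := exists_polynomial_near_of_continuousOn 0 1 h hhc.continuousOn ε hε
      have hint1 : IntervalIntegrable (fun t => h t * h t) volume 0 1 :=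
        (hhc.mul hhc).intervalIntegrable _ _
      have hint2 : IntervalIntegrable (fun t => (t * (1 - t) * p.eval t) * g t) volume 0 1 := by
        apply Continuous.intervalIntegrable
        fun_prop
      have hIeq : I = ∫ t in (0:ℝ)..1,
          (h t * h t - (t * (1 - t) * p.eval t) * g t) := by
        rw [intervalIntegral.integral_sub hint1 hint2, h0 p, sub_zero]
      have habs : |I| ≤ ∫ t in (0:ℝ)..1,
          |h t * h t - (t * (1 - t) * p.eval t) * g t| := by
        rw [hIeq]
        exact intervalIntegral.abs_integral_le_integral_abs zero_le_one
      have hmono : (∫ t in (0:ℝ)..1, |h t * h t - (t * (1 - t) * p.eval t) * g t|)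
          ≤ ∫ t in (0:ℝ)..1, |h t| * ε := by
        apply intervalIntegral.integral_mono_on zero_le_one
        · exact ((hhc.mul hhc).sub (by fun_prop)).abs.intervalIntegrable _ _
        · exact (hhc.abs.mul continuous_const).intervalIntegrable _ _
        · intro t ht
          have : h t * h t - (t * (1 - t) * p.eval t) * g t = h t * (h t - p.eval t) := by
            simp only [hh]; ring
          rw [this, abs_mul]
          have := hp t ht
          have h2 : |h t - p.eval t| ≤ ε := by
            rw [abs_sub_comm]; exact (le_of_lt this)
          exact mul_le_mul_of_nonneg_left h2 (abs_nonneg _)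
      have : (∫ t in (0:ℝ)..1, |h t| * ε) = C * ε := by
        rw [hCdef, ← intervalIntegral.integral_mul_const]
      linarith
    by_contra hne
    have habs : 0 < |I| := abs_pos.mpr hne
    have := key (|I| / (2 * (C + 1))) (by positivity)
    have hlt : C * (|I| / (2 * (C + 1))) < |I| := by
      rw [div_eq_mul_inv]
      have h1 : C * (|I| * (2 * (C + 1))⁻¹) = |I| * (C / (2 * (C + 1))) := by
        field_simp
      rw [h1]
      have h2 : C / (2 * (C + 1)) < 1 := by
        rw [div_lt_one (by positivity)]; linarith
      calc |I| * (C / (2 * (C + 1))) < |I| * 1 := by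
            apply mul_lt_mul_of_pos_left h2 habs
        _ = |I| := mul_one _
    linarith
  -- now: h t * h t is continuous, nonneg, zero integral ⟹ h = 0 on (0,1)
  intro t0 ht0
  by_contra hne
  have hht0ne : h t0 ≠ 0 := by
    simp only [hh]
    intro hcon
    rcases mul_eq_zero.mp hcon with hc | hc
    · rcases mul_eq_zero.mp hc with hc' | hc' <;> nlinarith [ht0.1, ht0.2]
    · exact hne hc
  have hht0 : 0 < h t0 * h t0 := mul_self_pos.mpr hht0ne
  have hcont : ContinuousAt (fun t => h t * h t) t0 := (hhc.mul hhc).continuousAt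
  have hev : ∀ᶠ t in nhds t0, 0 < h t * h t ∧ t ∈ Set.Ioo (0:ℝ) 1 :=
    (hcont.eventually (eventually_gt_nhds hht0)).and (isOpen_Ioo.mem_nhds ht0)
  obtain ⟨δ, hδ, hball⟩ := Metric.eventually_nhds_iff.mp hev
  obtain ⟨a, b, ha, hb⟩ : ∃ a b : ℝ, a = t0 - δ/2 ∧ b = t0 + δ/2 := ⟨_, _, rfl, rfl⟩
  have hmem : ∀ t : ℝ, a ≤ t → t ≤ b → (0 < h t * h t ∧ t ∈ Set.Ioo (0:ℝ) 1) := by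
    intro t h1 h2
    apply hball
    rw [Real.dist_eq, abs_lt]
    subst ha hb
    constructor <;> linarith
  have hab : a < b := by subst ha hb; linarith
  have h0a : (0:ℝ) ≤ a := le_of_lt (hmem a le_rfl hab.le).2.1
  have hb1 : b ≤ 1 := le_of_lt (hmem b hab.le le_rfl).2.2
  have hint : ∀ u w : ℝ, IntervalIntegrable (fun t => h t * h t) volume u w :=
    fun u w => (hhc.mul hhc).intervalIntegrable _ _
  have hsplit : (∫ t in (0:ℝ)..1, h t * h t) =
      ((∫ t in (0:ℝ)..a, h t * h t) + (∫ t in a..b, h t * h t))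
        + (∫ t in b..(1:ℝ), h t * h t) := by
    rw [intervalIntegral.integral_add_adjacent_intervals (hint 0 a) (hint a b),
      intervalIntegral.integral_add_adjacent_intervals (hint 0 b) (hint b 1)]
  have h1 : 0 ≤ ∫ t in (0:ℝ)..a, h t * h t :=
    intervalIntegral.integral_nonneg h0a (fun t _ => mul_self_nonneg _)
  have h3 : 0 ≤ ∫ t in b..(1:ℝ), h t * h t :=
    intervalIntegral.integral_nonneg hb1 (fun t _ => mul_self_nonneg _)
  have h2 : 0 < ∫ t in a..b, h t * h t := by
    apply intervalIntegral.intervalIntegral_pos_of_pos_on (hint a b) _ hab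
    intro t ht
    exact (hmem t ht.1.le ht.2.le).1
  linarith [hI, hsplit.symm.trans hI]

end Aux

/-- A `C²` curve `x` is a critical point of the free-particle action
`S(x) = ∫₀¹ (m/2)|x′|²` among histories with fixed endpoints — i.e. the
first variation `∫₀¹ ⟨m x′, v′⟩ dt` vanishes for every smooth variation `v`
vanishing at the endpoints — if and only if `x` satisfies the
Euler–Lagrange equation `m x″ = 0` on `(0,1)`. -/
theorem free_particle_critical_iff_euler_lagrange
    (E : Type*) [NormedAddCommGroup E] [InnerProductSpace ℝ E]
    (m : ℝ) (hm : 0 < m) (x : ℝ → E) (hx : ContDiff ℝ 2 x) :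
    (∀ v : ℝ → E, ContDiff ℝ (⊤ : ℕ∞) v → v 0 = 0 → v 1 = 0 →
        (∫ t in (0 : ℝ)..1, ⟪m • deriv x t, deriv v t⟫) = 0) ↔
      (∀ t ∈ Set.Ioo (0 : ℝ) 1, deriv (deriv x) t = 0) := by
  have hxd : ContDiff ℝ 1 (deriv x) := by
    have h2 : ContDiff ℝ (1 + 1 : ℕ) x := by exact_mod_cast hx
    exact_mod_cast (contDiff_succ_iff_deriv.mp (by exact_mod_cast h2)).2.2
  have hd1 : Differentiable ℝ (deriv x) := hxd.differentiable one_ne_zero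
  have hxc : Continuous (deriv x) := hxd.continuous
  have hx2 : Continuous (deriv (deriv x)) := (contDiff_one_iff_deriv.mp hxd).2
  constructor
  · intro hcrit t0 ht0
    set c := deriv (deriv x) t0 with hc
    have hkey : ∀ p : ℝ[X],
        (∫ t in (0:ℝ)..1, (t * (1 - t) * p.eval t) * ⟪deriv (deriv x) t, c⟫) = 0 := by
      intro p
      set q : ℝ[X] := Polynomial.X * (1 - Polynomial.X) * p with hq
      set v : ℝ → E := fun t => q.eval t • c with hv
      have hqsmooth : ContDiff ℝ (⊤ : ℕ∞) (fun t : ℝ => q.eval t) :=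
        (AnalyticOnNhd.eval_polynomial (𝕜 := ℝ) q).contDiff
      have hvsmooth : ContDiff ℝ (⊤ : ℕ∞) v := hqsmooth.smul contDiff_const
      have hv0 : v 0 = 0 := by simp [hv, hq]
      have hv1 : v 1 = 0 := by simp [hv, hq]
      have hcv := hcrit v hvsmooth hv0 hv1
      have hvd : Differentiable ℝ v := hvsmooth.differentiable (by simp)
      have hvdc : Continuous (deriv v) := (contDiff_one_iff_deriv.mp (hvsmooth.of_le (by simp))).2
      have hibp := free_ibp x v hd1 hxc hx2 hvd hvdc
      rw [hv0, hv1, inner_zero_right, inner_zero_right] at hibp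
      have hmint : (∫ t in (0:ℝ)..1, ⟪deriv x t, deriv v t⟫) = 0 := by
        have : (∫ t in (0:ℝ)..1, ⟪m • deriv x t, deriv v t⟫)
            = m * ∫ t in (0:ℝ)..1, ⟪deriv x t, deriv v t⟫ := by
          rw [← intervalIntegral.integral_const_mul]
          congr 1
          ext t
          rw [real_inner_smul_left]
        rw [this] at hcv
        exact (mul_eq_zero.mp hcv).resolve_left hm.ne'
      rw [hmint] at hibp
      have hfin : (∫ t in (0:ℝ)..1, ⟪deriv (deriv x) t, v t⟫) = 0 := by linarith
      rw [← hfin]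
      congr 1
      ext t
      rw [hv, real_inner_smul_right, hq]
      simp only [Polynomial.eval_mul, Polynomial.eval_sub, Polynomial.eval_one, Polynomial.eval_X]
    have := fund_lemma (fun t => ⟪deriv (deriv x) t, c⟫)
      (hx2.inner continuous_const) hkey t0 ht0
    have : ⟪c, c⟫ = 0 := this
    exact inner_self_eq_zero.mp this
  · intro hEL v hv hv0 hv1
    have hvd : Differentiable ℝ v := hv.differentiable (by simp)
    have hvdc : Continuous (deriv v) := (contDiff_one_iff_deriv.mp (hv.of_le (by simp))).2
    have hibp := free_ibp x v hd1 hxc hx2 hvd hvdc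
    rw [hv0, hv1, inner_zero_right, inner_zero_right] at hibp
    have hzero : (∫ t in (0:ℝ)..1, ⟪deriv (deriv x) t, v t⟫) = 0 := by
      rw [intervalIntegral.integral_of_le zero_le_one,
        ← MeasureTheory.Measure.restrict_congr_set MeasureTheory.Ioo_ae_eq_Ioc]
      rw [MeasureTheory.setIntegral_congr_fun (g := fun _ => (0:ℝ)) measurableSet_Ioo
        (fun t ht => by rw [hEL t ht, inner_zero_left])]
      simp
    have : (∫ t in (0:ℝ)..1, ⟪m • deriv x t, deriv v t⟫)
        = m * ∫ t in (0:ℝ)..1, ⟪deriv x t, deriv v t⟫ := by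
      rw [← intervalIntegral.integral_const_mul]
      congr 1
      ext t
      rw [real_inner_smul_left]
    rw [this, hibp, hzero]
    ring
end

section
/- Let R be a commutative ring, J = R[x₀, x₁, …] the jet algebra with derivation d (d(x_i) = x_{i+1}), and F ∈ J. Let I_F be the ideal of J generated by the family {d^k(F) : k ∈ ℕ} of all iterated total derivatives of F. Then: (a) I_F is a differential ideal, i.e. d maps I_F into I_F; and (b) for every commutative R-algebra A with R-linear derivation δ : A → A and every a ∈ A, the evaluation homomorphism φ_a : J → A determined by x_i ↦ δ^i(a) vanishes on I_F if and only if φ_a(F) = 0. Consequently the solution space {a ∈ A : F(δ^i a) = 0} is in natural bijection with the derivation-compatible R-algebra homomorphisms J/I_F → A, i.e. the quotient differential algebra Jet(O_C)/(F) represents the solution space of the differential equation F = 0. -/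
open MvPolynomial

private lemma jet_aeval_comm
    {R : Type*} [CommRing R]
    (d : Derivation R (MvPolynomial ℕ R) (MvPolynomial ℕ R))
    (hd : ∀ i : ℕ, d (X i) = X (i + 1))
    {A : Type*} [CommRing A] [Algebra R A] (δ : Derivation R A A) (a : A)
    (p : MvPolynomial ℕ R) :
    aeval (fun i : ℕ => (⇑δ)^[i] a) (d p) = δ (aeval (fun i : ℕ => (⇑δ)^[i] a) p) := by
  induction p using MvPolynomial.induction_on with
  | C r =>
      rw [show (C r : MvPolynomial ℕ R) = algebraMap R _ r from rfl,
        Derivation.map_algebraMap]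
      simp [Derivation.map_algebraMap]
  | add p q hp hq => simp [hp, hq]
  | mul_X p i hp =>
      rw [Derivation.leibniz]
      simp only [smul_eq_mul, map_add, map_mul, hd, hp, aeval_X,
        Function.iterate_succ_apply', Derivation.leibniz, smul_eq_mul]

private lemma jet_kill_iff
    {R : Type*} [CommRing R]
    (d : Derivation R (MvPolynomial ℕ R) (MvPolynomial ℕ R))
    (hd : ∀ i : ℕ, d (X i) = X (i + 1))
    (F : MvPolynomial ℕ R)
    (IF : Ideal (MvPolynomial ℕ R))
    (hIF : IF = Ideal.span (Set.range fun k : ℕ => (⇑d)^[k] F))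
    {A : Type*} [CommRing A] [Algebra R A] (δ : Derivation R A A) (a : A) :
    (∀ p ∈ IF, aeval (fun i : ℕ => (⇑δ)^[i] a) p = 0) ↔
      aeval (fun i : ℕ => (⇑δ)^[i] a) F = 0 := by
  constructor
  · intro h
    exact h F (by rw [hIF]; exact Ideal.subset_span ⟨0, rfl⟩)
  · intro hF p hp
    have hgen0 : ∀ k : ℕ, aeval (fun i : ℕ => (⇑δ)^[i] a) ((⇑d)^[k] F) = 0 := by
      intro k
      induction k with
      | zero => simpa using hF
      | succ k ih =>
          rw [Function.iterate_succ_apply', jet_aeval_comm d hd, ih, map_zero]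
    have hle : IF ≤ RingHom.ker (aeval (fun i : ℕ => (⇑δ)^[i] a)).toRingHom := by
      rw [hIF, Ideal.span_le]
      rintro x ⟨k, rfl⟩
      exact hgen0 k
    exact hle hp

/-- The quotient of the jet algebra `J = R[x₀, x₁, …]` (with total derivative
`d`, `d xᵢ = xᵢ₊₁`) by the differential ideal `I_F` generated by all iterated
total derivatives `d^k F` represents the solution space of the differential
equation `F = 0`:

(a) `I_F` is a differential ideal (`d` maps `I_F` to `I_F`);

(b) for every commutative `R`-algebra `A` with `R`-linear derivation `δ` and
every `a ∈ A`, the evaluation homomorphism `φ_a : xᵢ ↦ δ^[i] a` kills `I_F`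
iff `φ_a F = 0`;

(c) the solution space `{a ∈ A | φ_a F = 0}` is in bijection with the
derivation-compatible `R`-algebra homomorphisms `J/I_F → A`, via
`a ↦ (class of p ↦ φ_a p)`. -/
theorem jet_quotient_represents_solutions
    (R : Type*) [CommRing R]
    (d : Derivation R (MvPolynomial ℕ R) (MvPolynomial ℕ R))
    (hd : ∀ i : ℕ, d (X i) = X (i + 1))
    (F : MvPolynomial ℕ R)
    (IF : Ideal (MvPolynomial ℕ R))
    (hIF : IF = Ideal.span (Set.range fun k : ℕ => (⇑d)^[k] F)) :
    (∀ p ∈ IF, d p ∈ IF) ∧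
    (∀ (A : Type*) [CommRing A] [Algebra R A] (δ : Derivation R A A) (a : A),
      (∀ p ∈ IF, aeval (fun i : ℕ => (⇑δ)^[i] a) p = 0) ↔
        aeval (fun i : ℕ => (⇑δ)^[i] a) F = 0) ∧
    (∀ (A : Type*) [CommRing A] [Algebra R A] (δ : Derivation R A A),
      ∃ e : {a : A // aeval (fun i : ℕ => (⇑δ)^[i] a) F = 0} ≃
          {ψ : (MvPolynomial ℕ R ⧸ IF) →ₐ[R] A //
            ∀ p : MvPolynomial ℕ R,
              ψ (Ideal.Quotient.mk IF (d p)) = δ (ψ (Ideal.Quotient.mk IF p))},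
        ∀ (a : {a : A // aeval (fun i : ℕ => (⇑δ)^[i] a) F = 0})
          (p : MvPolynomial ℕ R),
          (e a : (MvPolynomial ℕ R ⧸ IF) →ₐ[R] A) (Ideal.Quotient.mk IF p) =
            aeval (fun i : ℕ => (⇑δ)^[i] (a : A)) p) := by
  have hgen : ∀ k : ℕ, (⇑d)^[k] F ∈ IF := fun k => by
    rw [hIF]; exact Ideal.subset_span ⟨k, rfl⟩
  have ha : ∀ p ∈ IF, d p ∈ IF := by
    intro p hp
    rw [hIF] at hp ⊢
    refine Submodule.span_induction (fun x hx => ?_) (by simp) (fun x y _ _ hx hy => by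
      simpa using Ideal.add_mem _ hx hy) (fun r x hxI hx => ?_) hp
    · obtain ⟨k, rfl⟩ := hx
      exact Ideal.subset_span ⟨k + 1, Function.iterate_succ_apply' _ _ _⟩
    · rw [smul_eq_mul, Derivation.leibniz, smul_eq_mul, smul_eq_mul]
      exact Ideal.add_mem _ (Ideal.mul_mem_left _ _ hx) (Ideal.mul_mem_right _ _ hxI)
  refine ⟨ha, fun A _ _ δ a => jet_kill_iff d hd F IF hIF δ a, ?_⟩
  intro A _ _ δ
  have hkill : ∀ a : A, aeval (fun i : ℕ => (⇑δ)^[i] a) F = 0 →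
      ∀ p ∈ IF, aeval (fun i : ℕ => (⇑δ)^[i] a) p = 0 := fun a h => (jet_kill_iff d hd F IF hIF δ a).mpr h
  have hXi : ∀ (ψ : (MvPolynomial ℕ R ⧸ IF) →ₐ[R] A)
      (_ : ∀ p, ψ (Ideal.Quotient.mk IF (d p)) = δ (ψ (Ideal.Quotient.mk IF p)))
      (i : ℕ), ψ (Ideal.Quotient.mk IF (X i)) = (⇑δ)^[i] (ψ (Ideal.Quotient.mk IF (X 0))) := by
    intro ψ hψ i
    induction i with
    | zero => rfl
    | succ i ih =>
        rw [Function.iterate_succ_apply', ← ih, ← hψ, hd]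
  have heq : ∀ (ψ : (MvPolynomial ℕ R ⧸ IF) →ₐ[R] A)
      (_ : ∀ p, ψ (Ideal.Quotient.mk IF (d p)) = δ (ψ (Ideal.Quotient.mk IF p)))
      (p : MvPolynomial ℕ R),
      ψ (Ideal.Quotient.mk IF p) =
        aeval (fun i : ℕ => (⇑δ)^[i] (ψ (Ideal.Quotient.mk IF (X 0)))) p := by
    intro ψ hψ p
    have := MvPolynomial.algHom_ext (f := ψ.comp (Ideal.Quotient.mkₐ R IF))
      (g := aeval (fun i : ℕ => (⇑δ)^[i] (ψ (Ideal.Quotient.mk IF (X 0)))))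
      (fun i => by simpa using hXi ψ hψ i)
    simpa using AlgHom.congr_fun this p
  refine ⟨{
    toFun := fun a => ⟨Ideal.Quotient.liftₐ IF (aeval (fun i : ℕ => (⇑δ)^[i] (a : A)))
        (hkill a a.2), fun p => ?_⟩
    invFun := fun ψ => ⟨ψ.1 (Ideal.Quotient.mk IF (X 0)), ?_⟩
    left_inv := ?_
    right_inv := ?_ }, ?_⟩
  · simp only [Ideal.Quotient.liftₐ_apply, Ideal.Quotient.lift_mk]
    exact jet_aeval_comm d hd δ a p
  · have h0 : ψ.1 (Ideal.Quotient.mk IF F) = 0 := by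
      rw [Ideal.Quotient.eq_zero_iff_mem.mpr (show F ∈ IF from hgen 0), map_zero]
    rw [← heq ψ.1 ψ.2 F, h0]
  · intro a
    ext
    simp [Ideal.Quotient.lift_mk]
    exact (Ideal.Quotient.lift_mk _ _ _).trans (by simp)
  · intro ψ
    ext q
    obtain ⟨p, rfl⟩ := Ideal.Quotient.mk_surjective q
    simp only [Ideal.Quotient.liftₐ_apply, Ideal.Quotient.lift_mk]
    exact (heq ψ.1 ψ.2 p).symm
  · intro a p
    simp [Ideal.Quotient.lift_mk]
    exact Ideal.Quotient.lift_mk _ _ _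
end
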